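/- arXiv:1709.03509 — 3 statements merged into one kernel-verified Lean document; each statement's English description precedes it below -/
import Mathlib

section
/- Let ℓ ∈ ℕ and for j = 1,…,ℓ let c_j ∈ ℝ, b_j > 0, η_j ∈ ℝ, and define f : ℝ → ℝ by f(ω) = Σ_{j=1}^ℓ c_j b_j / (b_j² + (ω − η_j)²). If there exist real numbers a₁ < a₂ such that f(ω) = 0 for all ω ∈ (a₁, a₂), then f(ω) = 0 for every ω ∈ ℝ. -/
/-! A sum of Lorentzians is a rational function without real poles, hence real-analytic on all
of `ℝ`; by the identity theorem on the connected line, vanishing on a nonempty open interval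
forces it to vanish everywhere. -/

open Set

theorem analyticOnNhd_lorentzian (c b η : ℝ) (hb : b ≠ 0) :
    AnalyticOnNhd ℝ (fun ω => c * b / (b ^ 2 + (ω - η) ^ 2)) univ := by
  refine analyticOnNhd_const.div
    (analyticOnNhd_const.add ((analyticOnNhd_id.sub analyticOnNhd_const).pow 2)) fun ω _ => ?_
  positivity

theorem AnalyticOnNhd.eq_zero_of_eqOn_zero_Ioo {E : Type*} [NormedAddCommGroup E]
    [NormedSpace ℝ E] {f : ℝ → E} (hf : AnalyticOnNhd ℝ f univ) {a₁ a₂ : ℝ} (ha : a₁ < a₂)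
    (hzero : EqOn f 0 (Ioo a₁ a₂)) : f = 0 := by
  obtain ⟨z, hz⟩ := nonempty_Ioo.mpr ha
  have hz_nhds : f =ᶠ[nhds z] 0 := Filter.eventuallyEq_of_mem (Ioo_mem_nhds hz.1 hz.2) hzero
  exact funext fun ω =>
    hf.eqOn_zero_of_preconnected_of_eventuallyEq_zero isPreconnected_univ (mem_univ z)
      hz_nhds (mem_univ ω)

/-- **A finite sum of Lorentzians vanishing on an interval vanishes identically.**
If `f(ω) = Σ_{j=1}^ℓ c_j b_j / (b_j² + (ω − η_j)²)` with all `b_j > 0` vanishes on a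
nonempty open interval `(a₁, a₂)`, then it vanishes on all of `ℝ`. -/
theorem sum_lorentzians_eq_zero_of_eq_zero_on_interval
    (ℓ : ℕ) (c b η : Fin ℓ → ℝ) (hb : ∀ j, 0 < b j)
    (f : ℝ → ℝ)
    (hf : ∀ ω, f ω = ∑ j, c j * b j / ((b j) ^ 2 + (ω - η j) ^ 2))
    (a₁ a₂ : ℝ) (ha : a₁ < a₂)
    (hvanish : ∀ ω ∈ Set.Ioo a₁ a₂, f ω = 0) :
    ∀ ω : ℝ, f ω = 0 := by
  have hf_analytic : AnalyticOnNhd ℝ f univ := by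
    rw [funext hf]
    exact Finset.analyticOnNhd_fun_sum _ fun j _ =>
      analyticOnNhd_lorentzian (c j) (b j) (η j) (hb j).ne'
  exact congrFun (hf_analytic.eq_zero_of_eqOn_zero_Ioo ha hvanish)
end

section
/- Let ℓ ∈ ℕ, ω₀ ∈ ℝ, and for j = 1,…,ℓ let η_j ∈ ℝ, γ_j ≥ 0, λ_j ∈ ℂ. Suppose c : ℝ → ℂ and b_j : ℝ → ℂ (j = 1,…,ℓ) are differentiable functions satisfying, for all t, the linear system c'(t) = −i ω₀ c(t) − i Σ_{j=1}^ℓ λ_j b_j(t) and b_j'(t) = (−i η_j − γ_j/2) b_j(t) − i conj(λ_j) c(t), with b_j(0) = 0 for every j. Then for every t ≥ 0, c'(t) = −i ω₀ c(t) − ∫_0^t K(t − s) c(s) ds, where K(τ) = Σ_{j=1}^ℓ |λ_j|² e^{(−i η_j − γ_j/2) τ}. -/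
/-!
Each pseudomode equation is linear and driven by `c`, so variation of constants with
`b_j(0) = 0` gives `b_j(t) = -i conj(λ_j) ∫₀ᵗ e^{μ_j (t-s)} c(s) ds`, `μ_j = -iη_j - γ_j/2`.
Substituting into `-i Σ_j λ_j b_j(t)` and using `(-i)(-i) λ_j conj(λ_j) = -|λ_j|²` yields the
memory term `-∫₀ᵗ K(t-s) c(s) ds`.
-/

open MeasureTheory intervalIntegral

theorem hasDerivAt_cexp_mul_ofReal (a : ℂ) (s : ℝ) :
    HasDerivAt (fun u : ℝ => Complex.exp (a * u)) (a * Complex.exp (a * s)) s := by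
  simpa [mul_comm] using (((hasDerivAt_id (s : ℂ)).const_mul a).cexp).comp_ofReal

/-- Variation of constants for `b' = μ b + f`. -/
theorem eq_exp_mul_add_integral_of_hasDerivAt {μ : ℂ} {f b : ℝ → ℂ} (hf : Continuous f)
    (hb : ∀ t, HasDerivAt b (μ * b t + f t) t) (t : ℝ) :
    b t = Complex.exp (μ * t) * b 0 +
      ∫ s in (0:ℝ)..t, Complex.exp (μ * ((t : ℂ) - s)) * f s := by
  have hderiv (s : ℝ) : HasDerivAt (fun u : ℝ => Complex.exp (-μ * u) * b u)
      (Complex.exp (-μ * s) * f s) s :=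
    ((hasDerivAt_cexp_mul_ofReal (-μ) s).mul (hb s)).congr_deriv (by ring)
  have hint : IntervalIntegrable (fun s : ℝ => Complex.exp (-μ * s) * f s) volume 0 t :=
    (by fun_prop : Continuous _).intervalIntegrable _ _
  have hexp (s : ℝ) :
      Complex.exp (μ * ((t : ℂ) - s)) = Complex.exp (μ * t) * Complex.exp (-μ * s) := by
    rw [← Complex.exp_add]; ring_nf
  have hcancel : Complex.exp (μ * t) * Complex.exp (-μ * t) = 1 := by
    rw [← Complex.exp_add, ← Complex.exp_zero]; ring_nf
  simp only [hexp, mul_assoc, intervalIntegral.integral_const_mul,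
    integral_eq_sub_of_hasDerivAt (fun s _ => hderiv s) hint, Complex.ofReal_zero, mul_zero,
    Complex.exp_zero]
  linear_combination (-b t) * hcancel

theorem pseudomode_memory_kernel_general
    (ℓ : ℕ) (ω₀ : ℝ) (η γ : Fin ℓ → ℝ) (lam : Fin ℓ → ℂ)
    (c : ℝ → ℂ) (b : Fin ℓ → ℝ → ℂ)
    (hc : ∀ t : ℝ, HasDerivAt c
        (-Complex.I * (ω₀ : ℂ) * c t - Complex.I * ∑ j, lam j * b j t) t)
    (hb : ∀ (j : Fin ℓ) (t : ℝ), HasDerivAt (b j)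
        ((-Complex.I * (η j : ℂ) - (γ j : ℂ) / 2) * b j t
          - Complex.I * (starRingEnd ℂ) (lam j) * c t) t)
    (hb0 : ∀ j, b j 0 = 0) :
    ∀ t : ℝ, 0 ≤ t →
      HasDerivAt c
        (-Complex.I * (ω₀ : ℂ) * c t -
          ∫ s in (0:ℝ)..t,
            (∑ j, ((‖lam j‖ : ℝ) : ℂ) ^ 2 *
              Complex.exp ((-Complex.I * (η j : ℂ) - (γ j : ℂ) / 2) * ((t : ℂ) - s)))
              * c s) t := by
  intro t _
  set μ : Fin ℓ → ℂ := fun j => -Complex.I * (η j : ℂ) - (γ j : ℂ) / 2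
  have hc_cont : Continuous c := continuous_iff_continuousAt.2 fun t => (hc t).continuousAt
  have hb_eq (j : Fin ℓ) : b j t = -Complex.I * (starRingEnd ℂ) (lam j) *
      ∫ s in (0:ℝ)..t, Complex.exp (μ j * ((t : ℂ) - s)) * c s := by
    rw [eq_exp_mul_add_integral_of_hasDerivAt (μ := μ j)
      (f := fun s => -Complex.I * (starRingEnd ℂ) (lam j) * c s) (by fun_prop)
      (fun s => (hb j s).congr_deriv (by ring)) t, hb0 j, mul_zero, zero_add,
      ← intervalIntegral.integral_const_mul]
    congr 1; ext s; ring
  have hmemory : (∫ s in (0:ℝ)..t, (∑ j, ((‖lam j‖ : ℝ) : ℂ) ^ 2 *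
      Complex.exp (μ j * ((t : ℂ) - s))) * c s) = Complex.I * ∑ j, lam j * b j t := by
    simp only [Finset.sum_mul, mul_assoc]
    rw [intervalIntegral.integral_finsetSum fun j _ =>
      (by fun_prop : Continuous _).intervalIntegrable _ _, Finset.mul_sum]
    refine Finset.sum_congr rfl fun j _ => ?_
    rw [intervalIntegral.integral_const_mul, hb_eq, ← Complex.ofReal_pow, Complex.sq_norm,
      ← Complex.mul_conj]
    linear_combination ((lam j * (starRingEnd ℂ) (lam j)) * ∫ s in (0:ℝ)..t,
      Complex.exp (μ j * ((t : ℂ) - s)) * c s) * Complex.I_mul_I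
  rw [hmemory]
  exact hc t

/-- **Memory kernel of the pseudomode construction.** If a two-level amplitude `c`
and pseudomode amplitudes `b_j` satisfy the linear system
`c' = −iω₀ c − i Σ_j λ_j b_j`, `b_j' = (−iη_j − γ_j/2) b_j − i conj(λ_j) c`
with `b_j(0) = 0`, then for all `t ≥ 0` the eliminated dynamics reads
`c'(t) = −iω₀ c(t) − ∫₀ᵗ K(t−s) c(s) ds` with
`K(τ) = Σ_j |λ_j|² e^{(−iη_j − γ_j/2)τ}`. -/
theorem pseudomode_memory_kernel
    (ℓ : ℕ) (ω₀ : ℝ) (η γ : Fin ℓ → ℝ) (hγ : ∀ j, 0 ≤ γ j) (lam : Fin ℓ → ℂ)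
    (c : ℝ → ℂ) (b : Fin ℓ → ℝ → ℂ)
    (hc : ∀ t : ℝ, HasDerivAt c
        (-Complex.I * (ω₀ : ℂ) * c t - Complex.I * ∑ j, lam j * b j t) t)
    (hb : ∀ (j : Fin ℓ) (t : ℝ), HasDerivAt (b j)
        ((-Complex.I * (η j : ℂ) - (γ j : ℂ) / 2) * b j t
          - Complex.I * (starRingEnd ℂ) (lam j) * c t) t)
    (hb0 : ∀ j, b j 0 = 0) :
    ∀ t : ℝ, 0 ≤ t →
      HasDerivAt c
        (-Complex.I * (ω₀ : ℂ) * c t -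
          ∫ s in (0:ℝ)..t,
            (∑ j, ((‖lam j‖ : ℝ) : ℂ) ^ 2 *
              Complex.exp ((-Complex.I * (η j : ℂ) - (γ j : ℂ) / 2) * ((t : ℂ) - s)))
              * c s) t :=
  pseudomode_memory_kernel_general ℓ ω₀ η γ lam c b hc hb hb0
end

section
/- Let ℓ ≥ 1 and for j = 1,…,ℓ let η_j ∈ ℝ, γ_j ≥ 0, λ_j ∈ ℂ. On the Hilbert space (ℂ²)^{⊗ℓ}, with matrices indexed by configurations x : Fin ℓ → {0,1}, define for each j the lowering operator c_j by (c_j)_{x,y} = 1 if x(j) = 0, y(j) = 1 and x(k) = y(k) for all k ≠ j, and 0 otherwise; let n_j = c_j† c_j, let ρ_vac be the rank-one projector onto the all-zero configuration, and let F = Σ_{j=1}^ℓ λ_j c_j. Let ℒ be the Lindblad generator with Hamiltonian Σ_{j=1}^ℓ η_j n_j, jump operators c_j and rates γ_j: ℒ(ρ) = −i[Σ_j η_j n_j, ρ] + Σ_j γ_j (c_j ρ c_j† − ½{n_j, ρ}). Then for every t ∈ ℝ, Tr( F · exp(tℒ)( F† ρ_vac ) ) = Σ_{j=1}^ℓ |λ_j|²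 e^{(−i η_j − γ_j/2) t}. -/
open scoped Matrix

attribute [local instance] Matrix.linftyOpNormedAddCommGroup Matrix.linftyOpNormedSpace

/-- The Lindblad (GKLS) generator
`ℒ(ρ) = −i[H,ρ] + Σ_j γ_j (L_j ρ L_j† − ½{L_j†L_j, ρ})`
as a linear endomorphism of the matrix space. -/
noncomputable def lindbladGen {d : Type*} [Fintype d] [DecidableEq d]
    {J : Type*} [Fintype J] (H : Matrix d d ℂ) (L : J → Matrix d d ℂ) (γ : J → ℝ) :
    Matrix d d ℂ →ₗ[ℂ] Matrix d d ℂ :=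
  (-Complex.I) • (LinearMap.mulLeft ℂ H - LinearMap.mulRight ℂ H)
    + ∑ j, (γ j : ℂ) •
        ((LinearMap.mulRight ℂ (L j)ᴴ).comp (LinearMap.mulLeft ℂ (L j))
          - (2⁻¹ : ℂ) • (LinearMap.mulLeft ℂ ((L j)ᴴ * L j)
              + LinearMap.mulRight ℂ ((L j)ᴴ * L j)))

/-- The quantum dynamical semigroup `exp(tℒ)`, the exponential of the Lindblad
generator taken in the algebra of (continuous) linear endomorphisms. -/
noncomputable def lindbladSemigroup {d : Type*} [Fintype d] [DecidableEq d]
    {J : Type*} [Fintype J] (H : Matrix d d ℂ) (L : J → Matrix d d ℂ) (γ : J → ℝ)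
    (t : ℝ) : Matrix d d ℂ →L[ℂ] Matrix d d ℂ :=
  letI : IsTopologicalRing (Matrix d d ℂ →L[ℂ] Matrix d d ℂ) :=
    letI : NormedRing (Matrix d d ℂ →L[ℂ] Matrix d d ℂ) := ContinuousLinearMap.toNormedRing
    NonUnitalSeminormedRing.toIsTopologicalRing
  NormedSpace.exp ((t : ℂ) • (lindbladGen H L γ).toContinuousLinearMap)

/-- The lowering operator of the `j`-th two-level mode on `(ℂ²)^{⊗ℓ}`, with matrices
indexed by configurations `x : Fin ℓ → Fin 2`. -/
noncomputable def lower (ℓ : ℕ) (j : Fin ℓ) :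
    Matrix (Fin ℓ → Fin 2) (Fin ℓ → Fin 2) ℂ :=
  Matrix.of fun x y =>
    if x j = 0 ∧ y j = 1 ∧ ∀ k, k ≠ j → x k = y k then 1 else 0

/-- The projector onto the all-zero (vacuum) configuration. -/
noncomputable def vacProj (ℓ : ℕ) :
    Matrix (Fin ℓ → Fin 2) (Fin ℓ → Fin 2) ℂ :=
  Matrix.of fun x y =>
    if x = (fun _ => (0 : Fin 2)) ∧ y = (fun _ => (0 : Fin 2)) then 1 else 0

/-!
The single-excitation coherences `c_jᴴ ρ_vac = |e_j⟩⟨0|` are eigenvectors of `ℒ`. Only two relations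
enter: `ρ_vac c_kᴴ = 0` (the vacuum is annihilated) and `c_k c_jᴴ ρ_vac = δ_kj ρ_vac`. By the first,
the jump terms `c_k X c_kᴴ` and right multiplication by `c_kᴴ c_k` vanish on `c_jᴴ ρ_vac`; by the
second, left multiplication by `c_kᴴ c_k` acts as `δ_kj`. Hence the eigenvalue is `-iη_j - γ_j/2`,
`exp(tℒ)` multiplies `c_jᴴ ρ_vac` by `e^{(-iη_j - γ_j/2)t}`, and `Tr(c_k c_jᴴ ρ_vac) = δ_kj`
collapses the double sum coming from `F` and `Fᴴ` to `Σ_j |λ_j|² e^{(-iη_j - γ_j/2)t}`.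
-/

theorem ContinuousLinearMap.exp_apply_of_apply_eq_smul {𝕂 X : Type*} [RCLike 𝕂]
    [NormedAddCommGroup X] [NormedSpace 𝕂 X] [CompleteSpace X]
    {A : X →L[𝕂] X} {c : 𝕂} {v : X} (h : A v = c • v) :
    NormedSpace.exp A v = NormedSpace.exp c • v := by
  have pow_apply (n : ℕ) : (A ^ n) v = c ^ n • v := by
    induction n with
    | zero => simp
    | succ n ih =>
      rw [pow_succ', mul_def, comp_apply, ih, map_smul, h, smul_smul, pow_succ]
  simp only [NormedSpace.exp_eq_tsum 𝕂]
  rw [← apply_apply v, (apply 𝕂 X v).map_tsum (NormedSpace.expSeries_summable' A),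
    ← (NormedSpace.expSeries_summable' c).tsum_smul_const]
  simp only [apply_apply, smul_apply, pow_apply, smul_smul, smul_eq_mul]

section Lindblad

variable {d J : Type*} [Fintype d] [DecidableEq d] [Fintype J]

theorem lindbladGen_apply (H : Matrix d d ℂ) (L : J → Matrix d d ℂ) (γ : J → ℝ)
    (ρ : Matrix d d ℂ) :
    lindbladGen H L γ ρ = -Complex.I • (H * ρ - ρ * H) + ∑ j, (γ j : ℂ) •
      (L j * ρ * (L j)ᴴ - (2⁻¹ : ℂ) • ((L j)ᴴ * L j * ρ + ρ * ((L j)ᴴ * L j))) := by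
  simp [lindbladGen, mul_assoc]

variable [DecidableEq J] {c : J → Matrix d d ℂ} {ρ : Matrix d d ℂ}

theorem lindbladGen_conjTranspose_mul (hρc : ∀ k, ρ * (c k)ᴴ = 0)
    (hcc : ∀ k j, c k * (c j)ᴴ * ρ = if k = j then ρ else 0) (η γ : J → ℝ) (j : J) :
    lindbladGen (∑ k, (η k : ℂ) • ((c k)ᴴ * c k)) c γ ((c j)ᴴ * ρ)
      = (-Complex.I * η j - γ j / 2) • ((c j)ᴴ * ρ) := by
  have number_mul (k : J) : (c k)ᴴ * c k * ((c j)ᴴ * ρ) = if k = j then (c j)ᴴ * ρ else 0 := by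
    rw [mul_assoc, ← mul_assoc (c k), hcc]
    split_ifs with hkj
    · rw [hkj]
    · rw [mul_zero]
  have mul_number (k : J) : (c j)ᴴ * ρ * ((c k)ᴴ * c k) = 0 := by
    rw [mul_assoc, ← mul_assoc ρ, hρc, zero_mul, mul_zero]
  have jump (k : J) : c k * ((c j)ᴴ * ρ) * (c k)ᴴ = 0 := by
    rw [mul_assoc, mul_assoc, hρc, mul_zero, mul_zero]
  simp only [lindbladGen_apply, Finset.sum_mul, Finset.mul_sum, smul_mul_assoc, mul_smul_comm,
    number_mul, mul_number, jump, smul_ite, smul_zero, Finset.sum_ite_eq', Finset.mem_univ,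
    if_true, add_zero, sub_zero, zero_sub, Finset.sum_const_zero, neg_ite, neg_zero]
  module

theorem lindbladSemigroup_conjTranspose_mul (hρc : ∀ k, ρ * (c k)ᴴ = 0)
    (hcc : ∀ k j, c k * (c j)ᴴ * ρ = if k = j then ρ else 0) (η γ : J → ℝ) (t : ℝ) (j : J) :
    lindbladSemigroup (∑ k, (η k : ℂ) • ((c k)ᴴ * c k)) c γ t ((c j)ᴴ * ρ)
      = Complex.exp ((-Complex.I * η j - γ j / 2) * t) • ((c j)ᴴ * ρ) := by
  rw [lindbladSemigroup, Complex.exp_eq_exp_ℂ]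
  apply ContinuousLinearMap.exp_apply_of_apply_eq_smul
  change (t : ℂ) • lindbladGen _ c γ ((c j)ᴴ * ρ) = _
  rw [lindbladGen_conjTranspose_mul hρc hcc, smul_smul, mul_comm]

theorem trace_sum_smul_mul_conjTranspose_mul
    (hcc : ∀ k j, c k * (c j)ᴴ * ρ = if k = j then ρ else 0) (lam : J → ℂ) (j : J) :
    ((∑ k, lam k • c k) * ((c j)ᴴ * ρ)).trace = lam j * ρ.trace := by
  simp only [Finset.sum_mul, smul_mul_assoc, ← mul_assoc, hcc, smul_ite, smul_zero,
    Finset.sum_ite_eq', Finset.mem_univ, if_true, Matrix.trace_smul, smul_eq_mul]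

theorem trace_mul_lindbladSemigroup_conjTranspose_mul (hρc : ∀ k, ρ * (c k)ᴴ = 0)
    (hcc : ∀ k j, c k * (c j)ᴴ * ρ = if k = j then ρ else 0) (hρ : ρ.trace = 1)
    (η γ : J → ℝ) (lam : J → ℂ) (t : ℝ) :
    ((∑ j, lam j • c j) *
        lindbladSemigroup (∑ j, (η j : ℂ) • ((c j)ᴴ * c j)) c γ t
          ((∑ j, lam j • c j)ᴴ * ρ)).trace =
      ∑ j, ((‖lam j‖ : ℝ) : ℂ) ^ 2 *
        Complex.exp ((-Complex.I * (η j : ℂ) - (γ j : ℂ) / 2) * (t : ℂ)) := by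
  have adjoint_mul : (∑ j, lam j • c j)ᴴ * ρ = ∑ j, star (lam j) • ((c j)ᴴ * ρ) := by
    simp only [Matrix.conjTranspose_sum, Matrix.conjTranspose_smul, Finset.sum_mul, smul_mul_assoc]
  rw [adjoint_mul, map_sum, Finset.mul_sum, Matrix.trace_sum]
  refine Finset.sum_congr rfl fun j _ => ?_
  rw [map_smul, lindbladSemigroup_conjTranspose_mul hρc hcc, smul_smul, mul_smul_comm,
    Matrix.trace_smul, trace_sum_smul_mul_conjTranspose_mul hcc, hρ, ← Complex.conj_mul',
    Complex.star_def, smul_eq_mul]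
  ring

end Lindblad

theorem Pi.eq_single_iff {ι M : Type*} [DecidableEq ι] [Zero M] {x : ι → M} {i : ι} {a : M} :
    x = Pi.single i a ↔ x i = a ∧ ∀ k ≠ i, x k = 0 :=
  Function.eq_update_iff

section Pseudomodes

variable (ℓ : ℕ)

theorem lower_apply_zero (k : Fin ℓ) (x : Fin ℓ → Fin 2) : lower ℓ k x 0 = 0 := by
  simp [lower]

theorem lower_zero_apply (j : Fin ℓ) (x : Fin ℓ → Fin 2) :
    lower ℓ j 0 x = if x = Pi.single j 1 then 1 else 0 := by
  simp only [lower, Matrix.of_apply, Pi.zero_apply, true_and, Pi.eq_single_iff, eq_comm]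

theorem lower_apply_single (k j : Fin ℓ) (x : Fin ℓ → Fin 2) :
    lower ℓ k x (Pi.single j 1) = if k = j ∧ x = 0 then 1 else 0 := by
  by_cases hkj : k = j
  · subst hkj
    simp +contextual [lower, ← Pi.single_zero k, Pi.eq_single_iff, -Pi.single_zero]
  · simp [lower, hkj]

theorem vacProj_eq_single : vacProj ℓ = Matrix.single 0 0 1 := by
  ext x y
  simp only [vacProj, Matrix.of_apply, Matrix.single_apply, ← Pi.zero_def, eq_comm]

theorem conjTranspose_lower_mul_vacProj (j : Fin ℓ) :
    (lower ℓ j)ᴴ * vacProj ℓ = Matrix.single (Pi.single j 1) 0 1 := by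
  ext x y
  by_cases hy : y = 0 <;>
    simp [vacProj_eq_single, hy, lower_zero_apply, Matrix.single_apply, eq_comm]

theorem lower_mul_single_zero (k j : Fin ℓ) :
    lower ℓ k * Matrix.single (Pi.single j 1) 0 1 = if k = j then vacProj ℓ else 0 := by
  ext x y
  by_cases hy : y = 0 <;> by_cases hkj : k = j <;>
    simp [vacProj_eq_single, hy, hkj, lower_apply_single, Matrix.single_apply, eq_comm]

theorem vacProj_mul_conjTranspose_lower (k : Fin ℓ) : vacProj ℓ * (lower ℓ k)ᴴ = 0 := by
  ext x y
  by_cases hx : x = 0 <;> simp [vacProj_eq_single, hx, lower_apply_zero]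

theorem lower_mul_conjTranspose_lower_mul_vacProj (k j : Fin ℓ) :
    lower ℓ k * (lower ℓ j)ᴴ * vacProj ℓ = if k = j then vacProj ℓ else 0 := by
  rw [mul_assoc, conjTranspose_lower_mul_vacProj, lower_mul_single_zero]

theorem trace_vacProj : (vacProj ℓ).trace = 1 := by
  rw [vacProj_eq_single, Matrix.trace_single_eq_same]

end Pseudomodes

theorem damped_pseudomodes_correlation_general
    (ℓ : ℕ) (η γ : Fin ℓ → ℝ) (lam : Fin ℓ → ℂ)
    (t : ℝ) :
    ((∑ j, lam j • lower ℓ j) *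
        lindbladSemigroup (∑ j, (η j : ℂ) • ((lower ℓ j)ᴴ * lower ℓ j)) (lower ℓ) γ t
          ((∑ j, lam j • lower ℓ j)ᴴ * vacProj ℓ)).trace =
      ∑ j, ((‖lam j‖ : ℝ) : ℂ) ^ 2 *
        Complex.exp ((-Complex.I * (η j : ℂ) - (γ j : ℂ) / 2) * (t : ℂ)) :=
  trace_mul_lindbladSemigroup_conjTranspose_mul (vacProj_mul_conjTranspose_lower ℓ)
    (lower_mul_conjTranspose_lower_mul_vacProj ℓ) (trace_vacProj ℓ) η γ lam t

/-- **Two-time correlation function of `ℓ` independent damped pseudomodes.**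
With `F = Σ_j λ_j c_j` and the Lindblad generator with Hamiltonian `Σ_j η_j c_j†c_j`,
jump operators `c_j` and rates `γ_j ≥ 0`, the vacuum correlation function is
`Tr(F · exp(tℒ)(F† ρ_vac)) = Σ_j |λ_j|² e^{(−iη_j − γ_j/2)t}`. -/
theorem damped_pseudomodes_correlation
    (ℓ : ℕ) (hℓ : 1 ≤ ℓ) (η γ : Fin ℓ → ℝ) (hγ : ∀ j, 0 ≤ γ j) (lam : Fin ℓ → ℂ)
    (t : ℝ) :
    ((∑ j, lam j • lower ℓ j) *
        lindbladSemigroup (∑ j, (η j : ℂ) • ((lower ℓ j)ᴴ * lower ℓ j)) (lower ℓ) γ t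
          ((∑ j, lam j • lower ℓ j)ᴴ * vacProj ℓ)).trace =
      ∑ j, ((‖lam j‖ : ℝ) : ℂ) ^ 2 *
        Complex.exp ((-Complex.I * (η j : ℂ) - (γ j : ℂ) / 2) * (t : ℂ)) :=
  damped_pseudomodes_correlation_general ℓ η γ lam t
end
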